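/- arXiv:2506.01871 — 5 statements merged into one kernel-verified Lean document; each statement's English description precedes it below -/
import Mathlib

section
/- Let σ ≥ 1 be a real number. For all complex numbers z₀, z₁, setting z_* = z₁ − z₀ and z_θ = z₀ + θ·z_* for θ ∈ [0,1], one has the exact Taylor-type expansion: |z₁|^{2σ} z₁ = |z₀|^{2σ} z₀ + (σ+1) |z₀|^{2σ} z_* + σ |z₀|^{2σ−2} z₀² · conj(z_*) + (σ+1) z_* ∫₀¹ (|z_θ|^{2σ} − |z₀|^{2σ}) dθ + σ · conj(z_*) ∫₀¹ (|z_θ|^{2σ−2} z_θ² − |z₀|^{2σ−2} z₀²) dθ. -/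
/-!
Along the segment `z_θ = z₀ + θ z_*`, `d/dθ |z_θ|² = 2 Re(conj z_θ · z_*)`, so
`d/dθ (|z_θ|^{2σ} z_θ) = (σ+1) |z_θ|^{2σ} z_* + σ |z_θ|^{2σ-2} z_θ² conj z_*`.
The expansion is the fundamental theorem of calculus for this derivative, with the values at
`θ = 0` split off the two integrals; `σ ≥ 1` makes `|z|^{2σ-2} z²` continuous, hence integrable.
-/

open MeasureTheory Complex

open ComplexConjugate RealInnerProductSpace

theorem HasDerivAt.norm_rpow {E : Type*} [NormedAddCommGroup E] [InnerProductSpace ℝ E]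
    {γ : ℝ → E} {γ' : E} {t p : ℝ} (hγ : HasDerivAt γ γ' t) (hp : 1 < p) :
    HasDerivAt (fun s ↦ ‖γ s‖ ^ p) (p * ‖γ t‖ ^ (p - 2) * ⟪γ t, γ'⟫) t := by
  have h := (hasFDerivAt_norm_rpow (γ t) hp).comp_hasDerivAt t hγ
  simp only [FunLike.coe_smul, Pi.smul_apply, innerSL_apply_apply, smul_eq_mul] at h
  exact h

theorem Complex.two_mul_real_inner (z w : ℂ) :
    2 * (⟪z, w⟫ : ℂ) = conj z * w + z * conj w := by
  rw [Complex.inner, re_eq_add_conj]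
  simp only [map_mul, conj_conj]
  ring

theorem HasDerivAt.norm_rpow_two_mul_mul {γ : ℝ → ℂ} {γ' : ℂ} {t σ : ℝ}
    (hγ : HasDerivAt γ γ' t) (hσ : 1 < 2 * σ) :
    HasDerivAt (fun s ↦ ((‖γ s‖ ^ (2 * σ) : ℝ) : ℂ) * γ s)
      ((σ + 1) * γ' * ((‖γ t‖ ^ (2 * σ) : ℝ) : ℂ)
        + σ * conj γ' * (((‖γ t‖ ^ (2 * σ - 2) : ℝ) : ℂ) * γ t ^ 2)) t := by
  refine ((hγ.norm_rpow hσ).ofReal_comp.fun_mul hγ).congr_deriv ?_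
  have hnorm :
      ((‖γ t‖ ^ (2 * σ - 2) : ℝ) : ℂ) * (conj (γ t) * γ t) = ((‖γ t‖ ^ (2 * σ) : ℝ) : ℂ) := by
    rw [← normSq_eq_conj_mul_self, normSq_eq_norm_sq]
    norm_cast
    rw [← Real.rpow_natCast, ← Real.rpow_add' (norm_nonneg _) (by norm_num; linarith)]
    norm_num
  have hinner := Complex.two_mul_real_inner (γ t) γ'
  push_cast at hinner hnorm ⊢
  linear_combination (σ * γ' : ℂ) * hnorm + (σ * ((‖γ t‖ ^ (2 * σ - 2) : ℝ) : ℂ) * γ t) * hinner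

theorem norm_rpow_two_mul_mul_sub_eq_integral {σ : ℝ} (hσ : 1 ≤ σ) (z₀ z₁ : ℂ) :
    ((‖z₁‖ ^ (2 * σ) : ℝ) : ℂ) * z₁ - ((‖z₀‖ ^ (2 * σ) : ℝ) : ℂ) * z₀ =
      (σ + 1) * (z₁ - z₀) * (∫ θ in (0 : ℝ)..1, ((‖z₀ + θ * (z₁ - z₀)‖ ^ (2 * σ) : ℝ) : ℂ))
      + σ * conj (z₁ - z₀) * ∫ θ in (0 : ℝ)..1,
          ((‖z₀ + θ * (z₁ - z₀)‖ ^ (2 * σ - 2) : ℝ) : ℂ) * (z₀ + θ * (z₁ - z₀)) ^ 2 := by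
  have hline (θ : ℝ) : HasDerivAt (fun θ : ℝ ↦ z₀ + θ * (z₁ - z₀)) (z₁ - z₀) θ := by
    simpa using ((hasDerivAt_id (θ : ℂ)).comp_ofReal.mul_const (z₁ - z₀)).const_add z₀
  have hftc := intervalIntegral.integral_eq_sub_of_hasDerivAt
    (fun θ _ ↦ (hline θ).norm_rpow_two_mul_mul (by linarith))
    (Continuous.intervalIntegrable (by fun_prop (disch := linarith)) 0 1)
  rw [intervalIntegral.integral_add, intervalIntegral.integral_const_mul,
    intervalIntegral.integral_const_mul] at hftc
  · simp only [Complex.ofReal_zero, Complex.ofReal_one, zero_mul, one_mul, add_zero,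
      add_sub_cancel] at hftc
    exact hftc.symm
  all_goals exact Continuous.intervalIntegrable (by fun_prop (disch := linarith)) 0 1

/-- Taylor-type expansion of `|z₁|^{2σ} z₁` around `z₀`. -/
theorem taylor_expansion_cubic_power
    (σ : ℝ) (hσ : 1 ≤ σ) (z₀ z₁ : ℂ) :
    (↑(‖z₁‖ ^ (2*σ)) : ℂ) * z₁ =
      (↑(‖z₀‖ ^ (2*σ)) : ℂ) * z₀
      + (↑(σ+1) : ℂ) * (↑(‖z₀‖ ^ (2*σ)) : ℂ) * (z₁ - z₀)
      + (↑σ : ℂ) * (↑(‖z₀‖ ^ (2*σ-2)) : ℂ) * z₀^2 * (starRingEnd ℂ) (z₁ - z₀)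
      + (↑(σ+1) : ℂ) * (z₁ - z₀) *
          (∫ θ in (0:ℝ)..1,
            ((↑(‖z₀ + ↑θ * (z₁ - z₀)‖ ^ (2*σ)) : ℂ)
              - (↑(‖z₀‖ ^ (2*σ)) : ℂ)))
      + (↑σ : ℂ) * (starRingEnd ℂ) (z₁ - z₀) *
          (∫ θ in (0:ℝ)..1,
            ((↑(‖z₀ + ↑θ * (z₁ - z₀)‖ ^ (2*σ-2)) : ℂ) * (z₀ + ↑θ * (z₁ - z₀))^2
              - (↑(‖z₀‖ ^ (2*σ-2)) : ℂ) * z₀^2)) := by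
  rw [intervalIntegral.integral_sub, intervalIntegral.integral_sub, intervalIntegral.integral_const,
    intervalIntegral.integral_const]
  · simp only [sub_zero, one_smul, Complex.ofReal_add, Complex.ofReal_one]
    linear_combination norm_rpow_two_mul_mul_sub_eq_integral hσ z₀ z₁
  all_goals first
    | exact intervalIntegrable_const
    | exact Continuous.intervalIntegrable (by fun_prop (disch := linarith)) 0 1
end

section
/- Let σ ≥ 1 be a real number. There exists a constant C > 0, depending only on σ, such that for all complex numbers z₀, z_* and all θ ∈ [0,1], with z_θ = z₀ + θ·z_*: | |z_θ|^{2σ} − |z₀|^{2σ} | + | |z_θ|^{2σ−2} z_θ² − |z₀|^{2σ−2} z₀² | ≤ C ( |z_*|^{2σ} + |z₀|^{2σ−1} |z_*| ). -/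
open Complex

/-!
With `p = 2σ`, `w = z₀ + θ z_*` and `d = ‖w - z₀‖ ≤ ‖z_*‖`, the mean value theorem for `t ↦ t ^ p`
gives `|‖w‖^p - ‖z₀‖^p| ≤ p (‖z₀‖ + d)^(p-1) d`, and convexity of `t ↦ t^(p-1)` splits this into
`‖z₀‖^(p-1) d + d^p`. For the second term write `‖z‖^(p-2) z² = ‖z‖^p u(z)²` with `u(z) = z / ‖z‖`:
its difference is the difference of the `‖·‖^p` plus `‖z₀‖^p ‖u(w)² - u(z₀)²‖`, and
`‖z₀‖ ‖u(w) - u(z₀)‖ ≤ 2d`.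
-/

namespace Real

theorem abs_rpow_sub_rpow_le_mul_max_rpow {p x y : ℝ} (hp : 1 ≤ p) (hx : 0 ≤ x) (hy : 0 ≤ y) :
    |x ^ p - y ^ p| ≤ p * max x y ^ (p - 1) * |x - y| := by
  wlog hyx : y ≤ x generalizing x y
  · rw [abs_sub_comm, abs_sub_comm x, max_comm]
    exact this hy hx (le_of_not_ge hyx)
  have hderiv : ∀ t ∈ Set.Icc y x, HasDerivWithinAt (· ^ p) (p * t ^ (p - 1)) (Set.Icc y x) t :=
    fun t _ => (hasDerivAt_rpow_const (Or.inr hp)).hasDerivWithinAt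
  have hbound : ∀ t ∈ Set.Icc y x, ‖p * t ^ (p - 1)‖ ≤ p * max x y ^ (p - 1) := by
    rintro t ⟨hyt, htx⟩
    have ht : 0 ≤ t := hy.trans hyt
    rw [norm_of_nonneg (by positivity), max_eq_left hyx]
    gcongr
  simpa only [norm_eq_abs] using
    (convex_Icc y x).norm_image_sub_le_of_norm_hasDerivWithin_le hderiv hbound
      ⟨le_rfl, hyx⟩ ⟨hyx, le_rfl⟩

end Real

theorem abs_norm_rpow_sub_norm_rpow_le {E : Type*} [SeminormedAddCommGroup E] {p : ℝ}
    (hp : 2 ≤ p) (z w : E) :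
    |‖w‖ ^ p - ‖z‖ ^ p| ≤ p * 2 ^ (p - 2) * (‖z‖ ^ (p - 1) * ‖w - z‖ + ‖w - z‖ ^ p) := by
  set d := ‖w - z‖
  have hd : 0 ≤ d := norm_nonneg _
  have hmax : max ‖w‖ ‖z‖ ≤ ‖z‖ + d :=
    max_le (norm_le_norm_add_norm_sub' w z) (le_add_of_nonneg_right hd)
  have hconv : (‖z‖ + d) ^ (p - 1) ≤ 2 ^ (p - 2) * (‖z‖ ^ (p - 1) + d ^ (p - 1)) := by
    have := NNReal.rpow_add_le_mul_rpow_add_rpow ‖z‖₊ ‖w - z‖₊ (p := p - 1) (by linarith)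
    rw [← NNReal.coe_le_coe] at this
    push_cast at this
    convert this using 3; ring
  have hdp : d ^ (p - 1) * d = d ^ p := by
    conv_rhs => rw [show p = (p - 1) + 1 by ring, Real.rpow_add' hd (by linarith), Real.rpow_one]
  calc |‖w‖ ^ p - ‖z‖ ^ p|
      ≤ p * max ‖w‖ ‖z‖ ^ (p - 1) * |‖w‖ - ‖z‖| :=
        Real.abs_rpow_sub_rpow_le_mul_max_rpow (by linarith) (norm_nonneg _) (norm_nonneg _)
    _ ≤ p * (‖z‖ + d) ^ (p - 1) * d := by
        gcongr
        · linarith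
        · exact abs_norm_sub_norm_le w z
    _ ≤ p * (2 ^ (p - 2) * (‖z‖ ^ (p - 1) + d ^ (p - 1))) * d := by
        gcongr
    _ = p * 2 ^ (p - 2) * (‖z‖ ^ (p - 1) * d + d ^ p) := by rw [← hdp]; ring

theorem norm_mul_norm_inv_smul_sub_norm_inv_smul_le {E : Type*} [NormedAddCommGroup E]
    [NormedSpace ℝ E] (z w : E) : ‖z‖ * ‖‖w‖⁻¹ • w - ‖z‖⁻¹ • z‖ ≤ 2 * ‖w - z‖ := by
  rcases eq_or_ne z 0 with rfl | hz
  · simp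
  rcases eq_or_ne w 0 with rfl | hw
  · rw [smul_zero, zero_sub, zero_sub, norm_neg, norm_neg, norm_smul, norm_inv, norm_norm,
      inv_mul_cancel₀ (norm_ne_zero_iff.mpr hz)]
    linarith [norm_nonneg z]
  have hw' : ‖w‖ ≠ 0 := norm_ne_zero_iff.mpr hw
  have hsplit : ‖z‖ • (‖w‖⁻¹ • w - ‖z‖⁻¹ • z) = (w - z) + ((‖z‖ - ‖w‖) / ‖w‖) • w := by
    rw [smul_sub, smul_smul, smul_smul, mul_inv_cancel₀ (norm_ne_zero_iff.mpr hz), one_smul,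
      sub_div, div_self hw', sub_smul, one_smul, div_eq_mul_inv]
    abel
  calc ‖z‖ * ‖‖w‖⁻¹ • w - ‖z‖⁻¹ • z‖
      = ‖(w - z) + ((‖z‖ - ‖w‖) / ‖w‖) • w‖ := by rw [← hsplit, norm_smul, norm_norm]
    _ ≤ ‖w - z‖ + |‖z‖ - ‖w‖| := by
        refine (norm_add_le _ _).trans_eq ?_
        rw [norm_smul, Real.norm_eq_abs, abs_div, abs_norm, div_mul_cancel₀ _ hw']
    _ ≤ 2 * ‖w - z‖ := by
        linarith [abs_norm_sub_norm_le z w, norm_sub_rev z w]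

namespace Complex

theorem norm_div_norm_le_one (z : ℂ) : ‖z / ‖z‖‖ ≤ 1 := by
  rcases eq_or_ne z 0 with rfl | hz
  · simp
  · simp [hz]

/-- Also valid at `z = 0`, where `z / ‖z‖ = 0`. -/
theorem ofReal_norm_rpow_sub_two_mul_sq (p : ℝ) (z : ℂ) :
    (↑(‖z‖ ^ (p - 2)) : ℂ) * z ^ 2 = ↑(‖z‖ ^ p) * (z / ‖z‖) ^ 2 := by
  rcases eq_or_ne z 0 with rfl | hz
  · simp
  rw [Real.rpow_sub (norm_pos_iff.mpr hz), Real.rpow_two]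
  push_cast
  field_simp

theorem norm_mul_norm_sq_div_norm_sub_sq_div_norm_le (z w : ℂ) :
    ‖z‖ * ‖(w / ‖w‖) ^ 2 - (z / ‖z‖) ^ 2‖ ≤ 4 * ‖w - z‖ := by
  have hsmul (x : ℂ) : x / ‖x‖ = ‖x‖⁻¹ • x := by
    rw [real_smul, ofReal_inv, div_eq_inv_mul]
  have hsum : ‖w / ‖w‖ + z / ‖z‖‖ ≤ 2 :=
    (norm_add_le _ _).trans (by linarith [norm_div_norm_le_one w, norm_div_norm_le_one z])
  calc ‖z‖ * ‖(w / ‖w‖) ^ 2 - (z / ‖z‖) ^ 2‖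
      = ‖w / ‖w‖ + z / ‖z‖‖ * (‖z‖ * ‖w / ‖w‖ - z / ‖z‖‖) := by
        rw [sq_sub_sq, norm_mul]; ring
    _ ≤ 2 * (2 * ‖w - z‖) := by
        rw [hsmul w, hsmul z] at hsum ⊢
        exact mul_le_mul hsum (norm_mul_norm_inv_smul_sub_norm_inv_smul_le z w)
          (by positivity) zero_le_two
    _ = 4 * ‖w - z‖ := by ring

theorem norm_ofReal_rpow_mul_sq_sub_le {p : ℝ} (hp : 1 ≤ p) (z w : ℂ) :
    ‖(↑(‖w‖ ^ (p - 2)) : ℂ) * w ^ 2 - ↑(‖z‖ ^ (p - 2)) * z ^ 2‖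
      ≤ |‖w‖ ^ p - ‖z‖ ^ p| + 4 * ‖z‖ ^ (p - 1) * ‖w - z‖ := by
  have hsplit : (↑(‖w‖ ^ (p - 2)) : ℂ) * w ^ 2 - ↑(‖z‖ ^ (p - 2)) * z ^ 2
      = ↑(‖w‖ ^ p - ‖z‖ ^ p) * (w / ‖w‖) ^ 2
        + ↑(‖z‖ ^ p) * ((w / ‖w‖) ^ 2 - (z / ‖z‖) ^ 2) := by
    rw [ofReal_norm_rpow_sub_two_mul_sq, ofReal_norm_rpow_sub_two_mul_sq]
    push_cast
    ring
  have hunit : ‖(w / ‖w‖) ^ 2‖ ≤ 1 := by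
    rw [norm_pow]
    exact pow_le_one₀ (norm_nonneg _) (norm_div_norm_le_one w)
  have hzp : ‖z‖ ^ p = ‖z‖ ^ (p - 1) * ‖z‖ := by
    conv_lhs => rw [show p = (p - 1) + 1 by ring, Real.rpow_add' (norm_nonneg z) (by linarith),
      Real.rpow_one]
  rw [hsplit]
  refine (norm_add_le _ _).trans ?_
  rw [norm_mul, norm_mul, norm_real, norm_real, Real.norm_eq_abs, Real.norm_of_nonneg
    (by positivity), hzp]
  refine add_le_add (mul_le_of_le_one_right (abs_nonneg _) hunit) ?_
  have h := mul_le_mul_of_nonneg_left (norm_mul_norm_sq_div_norm_sub_sq_div_norm_le z w)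
    (Real.rpow_nonneg (norm_nonneg z) (p - 1))
  exact (le_of_eq (by ring)).trans (h.trans_eq (by ring))

theorem abs_norm_rpow_sub_add_norm_ofReal_rpow_mul_sq_sub_le {p : ℝ} (hp : 2 ≤ p) (z w : ℂ) :
    |‖w‖ ^ p - ‖z‖ ^ p| + ‖(↑(‖w‖ ^ (p - 2)) : ℂ) * w ^ 2 - ↑(‖z‖ ^ (p - 2)) * z ^ 2‖
      ≤ (p * 2 ^ (p - 1) + 4) * (‖w - z‖ ^ p + ‖z‖ ^ (p - 1) * ‖w - z‖) := by
  have hF := abs_norm_rpow_sub_norm_rpow_le hp z w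
  have hG := norm_ofReal_rpow_mul_sq_sub_le (p := p) (by linarith) z w
  have htwo : 2 * 2 ^ (p - 2) = (2 : ℝ) ^ (p - 1) := by
    rw [show p - 1 = (p - 2) + 1 by ring, Real.rpow_add_one two_ne_zero]; ring
  calc _ ≤ 2 * |‖w‖ ^ p - ‖z‖ ^ p| + 4 * ‖z‖ ^ (p - 1) * ‖w - z‖ := by linarith
    _ ≤ 2 * (p * 2 ^ (p - 2) * (‖z‖ ^ (p - 1) * ‖w - z‖ + ‖w - z‖ ^ p))
        + 4 * (‖z‖ ^ (p - 1) * ‖w - z‖) := by linarith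
    _ = p * (2 * 2 ^ (p - 2)) * (‖w - z‖ ^ p + ‖z‖ ^ (p - 1) * ‖w - z‖)
        + 4 * (‖z‖ ^ (p - 1) * ‖w - z‖) := by ring
    _ ≤ _ := by
        rw [htwo]
        nlinarith [Real.rpow_nonneg (norm_nonneg (w - z)) p]

end Complex

/-- bound for the differences `|z_θ|^{2σ} − |z₀|^{2σ}` and
`|z_θ|^{2σ−2} z_θ² − |z₀|^{2σ−2} z₀²` along the segment `z_θ = z₀ + θ z_*`. -/
theorem segment_difference_bound (σ : ℝ) (hσ : 1 ≤ σ) :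
    ∃ C > 0, ∀ (z₀ zs : ℂ) (θ : ℝ), θ ∈ Set.Icc (0:ℝ) 1 →
      |‖z₀ + ↑θ * zs‖ ^ (2*σ) - ‖z₀‖ ^ (2*σ)|
      + ‖(↑(‖z₀ + ↑θ * zs‖ ^ (2*σ-2)) : ℂ) * (z₀ + ↑θ * zs)^2
          - (↑(‖z₀‖ ^ (2*σ-2)) : ℂ) * z₀^2‖
      ≤ C * (‖zs‖ ^ (2*σ) + ‖z₀‖ ^ (2*σ-1) * ‖zs‖) := by
  refine ⟨2 * σ * 2 ^ (2 * σ - 1) + 4, by positivity, fun z₀ zs θ hθ => ?_⟩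
  have hstep : ‖z₀ + θ * zs - z₀‖ ≤ ‖zs‖ := by
    rw [add_sub_cancel_left, norm_mul, norm_real, Real.norm_of_nonneg hθ.1]
    exact mul_le_of_le_one_left (norm_nonneg _) hθ.2
  refine (abs_norm_rpow_sub_add_norm_ofReal_rpow_mul_sq_sub_le (by linarith) z₀ _).trans ?_
  gcongr
end

section
/- Let σ ≥ 1 be a real number and n a natural number. There exists a constant C > 0, depending only on σ and n, such that for all complex numbers z₀, z_* and all θ ∈ [0,1], with z_θ = z₀ + θ·z_*: | |z_θ|^{2σ−1−n} z_θ^n − |z₀|^{2σ−1−n} z₀^n | ≤ C ( |z_*|^{2σ−1} + |z₀|^{2σ−2} |z_*| ). -/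
/-!
Put `α = 2σ - 1 ≥ 1` and `f(z) = ‖z‖^(α-n) z^n = ‖z‖^α (z/‖z‖)^n`. Split `f w - f z` into a change
of modulus at fixed phase, bounded through the convexity of `t ↦ t^α`, and a change of phase
at fixed modulus, bounded since `‖w‖ ‖w/‖w‖ - z/‖z‖‖ ≤ 2 ‖w - z‖`. This gives the local Lipschitz
bound `‖f w - f z‖ ≤ (α + 2n) max(‖w‖, ‖z‖)^(α-1) ‖w - z‖`. On the segment `‖z_θ - z₀‖ ≤ ‖z_*‖`
and `max(‖z_θ‖, ‖z₀‖) ≤ ‖z₀‖ + ‖z_*‖`, and `(a + b)^(α-1) ≤ 2^(α-1) (a^(α-1) + b^(α-1))`.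
-/

namespace Real

lemma rpow_eq_rpow_sub_one_mul {x p : ℝ} (hx : 0 ≤ x) (hp : p ≠ 0) : x ^ p = x ^ (p - 1) * x := by
  conv_lhs => rw [← sub_add_cancel p 1, rpow_add' hx (by simpa using hp), rpow_one]

lemma rpow_sub_rpow_le_mul_rpow_sub_one_mul {a b p : ℝ} (hb : 0 ≤ b) (hba : b ≤ a) (hp : 1 ≤ p) :
    a ^ p - b ^ p ≤ p * a ^ (p - 1) * (a - b) := by
  rcases hba.eq_or_lt with rfl | hlt
  · simp
  have hslope := (convexOn_rpow hp).slope_le_of_hasDerivAt hb (hb.trans hba) hlt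
    (hasDerivAt_rpow_const (Or.inr hp))
  rwa [slope_def_field, div_le_iff₀ (sub_pos.2 hlt)] at hslope

lemma add_rpow_le_two_rpow_mul_add_rpow {a b p : ℝ} (ha : 0 ≤ a) (hb : 0 ≤ b) (hp : 0 ≤ p) :
    (a + b) ^ p ≤ 2 ^ p * (a ^ p + b ^ p) := by
  wlog hab : b ≤ a generalizing a b
  · simpa only [add_comm] using this hb ha (le_of_not_ge hab)
  calc (a + b) ^ p ≤ (2 * a) ^ p := by gcongr; linarith
    _ = 2 ^ p * a ^ p := mul_rpow zero_le_two ha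
    _ ≤ 2 ^ p * (a ^ p + b ^ p) := by gcongr; exact le_add_of_nonneg_right (by positivity)

end Real

lemma norm_pow_sub_pow_le_of_norm_le_one {R : Type*} [SeminormedCommRing R] [NormOneClass R]
    {p q : R} (hp : ‖p‖ ≤ 1) (hq : ‖q‖ ≤ 1) (n : ℕ) :
    ‖p ^ n - q ^ n‖ ≤ n * ‖p - q‖ := by
  have hsum : ‖∑ i ∈ Finset.range n, p ^ i * q ^ (n - 1 - i)‖ ≤ n := by
    calc ‖∑ i ∈ Finset.range n, p ^ i * q ^ (n - 1 - i)‖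
        ≤ ∑ i ∈ Finset.range n, ‖p ^ i * q ^ (n - 1 - i)‖ := norm_sum_le _ _
      _ ≤ ∑ _i ∈ Finset.range n, (1 : ℝ) := by
        refine Finset.sum_le_sum fun i _ ↦ (norm_mul_le _ _).trans ?_
        exact mul_le_one₀ ((norm_pow_le _ _).trans (pow_le_one₀ (norm_nonneg _) hp))
          (norm_nonneg _) ((norm_pow_le _ _).trans (pow_le_one₀ (norm_nonneg _) hq))
      _ = n := by simp
  rw [← geom_sum₂_mul]
  exact (norm_mul_le _ _).trans (by gcongr)

lemma norm_mul_norm_inv_norm_smul_sub_le {E : Type*} [NormedAddCommGroup E]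
    [NormedSpace ℝ E] (w z : E) :
    ‖w‖ * ‖‖w‖⁻¹ • w - ‖z‖⁻¹ • z‖ ≤ 2 * ‖w - z‖ := by
  rcases eq_or_ne w 0 with rfl | hw
  · simp
  rcases eq_or_ne z 0 with rfl | hz
  · simp [norm_smul, hw]
  have hW : ‖w‖ ≠ 0 := norm_ne_zero_iff.2 hw
  have hZ : ‖z‖ ≠ 0 := norm_ne_zero_iff.2 hz
  have hrescale : ‖w‖ • (‖w‖⁻¹ • w - ‖z‖⁻¹ • z) = (w - z) + ((‖z‖ - ‖w‖) / ‖z‖) • z := by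
    rw [smul_sub, smul_smul, smul_smul, mul_inv_cancel₀ hW, one_smul, sub_div, div_self hZ,
      sub_smul, one_smul, div_eq_mul_inv]
    abel
  calc ‖w‖ * ‖‖w‖⁻¹ • w - ‖z‖⁻¹ • z‖ = ‖(w - z) + ((‖z‖ - ‖w‖) / ‖z‖) • z‖ := by
        rw [← hrescale, norm_smul, norm_norm]
    _ ≤ ‖w - z‖ + |‖z‖ - ‖w‖| := by
        refine (norm_add_le _ _).trans_eq ?_
        rw [norm_smul, Real.norm_eq_abs, abs_div, abs_norm, div_mul_cancel₀ _ hZ]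
    _ ≤ 2 * ‖w - z‖ := by
        have := abs_norm_sub_norm_le z w
        rw [norm_sub_rev] at this
        linarith

section RCLike

variable {𝕜 : Type*} [RCLike 𝕜]

noncomputable def normRpowMulPow (α : ℝ) (n : ℕ) (z : 𝕜) : 𝕜 := ((‖z‖ ^ (α - n) : ℝ) : 𝕜) * z ^ n

lemma normRpowMulPow_eq (α : ℝ) (n : ℕ) (z : 𝕜) :
    normRpowMulPow α n z = ((‖z‖ ^ α : ℝ) : 𝕜) * (‖z‖⁻¹ • z) ^ n := by
  rcases eq_or_ne z 0 with rfl | hz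
  · rcases n with _ | n <;> simp [normRpowMulPow]
  have hZ : 0 < ‖z‖ := norm_pos_iff.2 hz
  rw [normRpowMulPow, Real.rpow_sub hZ, Real.rpow_natCast, smul_pow, RCLike.real_smul_eq_coe_mul]
  push_cast
  rw [inv_pow]
  ring


lemma norm_normRpowMulPow_sub_le_of_norm_le {α : ℝ} (hα : 1 ≤ α) (n : ℕ) {w z : 𝕜}
    (hzw : ‖z‖ ≤ ‖w‖) :
    ‖normRpowMulPow α n w - normRpowMulPow α n z‖ ≤ (α + 2 * n) * ‖w‖ ^ (α - 1) * ‖w - z‖ := by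
  set u := ‖w‖⁻¹ • w
  set v := ‖z‖⁻¹ • z
  have hu : ‖u‖ ≤ 1 := mem_closedBall_zero_iff.1 (inv_norm_smul_mem_unitClosedBall w)
  have hv : ‖v‖ ≤ 1 := mem_closedBall_zero_iff.1 (inv_norm_smul_mem_unitClosedBall z)
  have hWα : ‖w‖ ^ α = ‖w‖ ^ (α - 1) * ‖w‖ :=
    Real.rpow_eq_rpow_sub_one_mul (norm_nonneg w) (by linarith)
  have hZW : ‖z‖ ^ α ≤ ‖w‖ ^ α := by gcongr
  have hsplit : normRpowMulPow α n w - normRpowMulPow α n z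
      = ((‖w‖ ^ α - ‖z‖ ^ α : ℝ) : 𝕜) * u ^ n + ((‖z‖ ^ α : ℝ) : 𝕜) * (u ^ n - v ^ n) := by
    rw [normRpowMulPow_eq, normRpowMulPow_eq]
    push_cast
    ring
  have hmodulus : ‖((‖w‖ ^ α - ‖z‖ ^ α : ℝ) : 𝕜) * u ^ n‖ ≤ α * ‖w‖ ^ (α - 1) * ‖w - z‖ := by
    rw [norm_mul, RCLike.norm_ofReal, abs_of_nonneg (sub_nonneg.2 hZW), norm_pow]
    calc (‖w‖ ^ α - ‖z‖ ^ α) * ‖u‖ ^ n ≤ ‖w‖ ^ α - ‖z‖ ^ α :=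
          mul_le_of_le_one_right (sub_nonneg.2 hZW) (pow_le_one₀ (norm_nonneg u) hu)
      _ ≤ α * ‖w‖ ^ (α - 1) * (‖w‖ - ‖z‖) :=
          Real.rpow_sub_rpow_le_mul_rpow_sub_one_mul (norm_nonneg z) hzw hα
      _ ≤ α * ‖w‖ ^ (α - 1) * ‖w - z‖ := by gcongr; exact norm_sub_norm_le w z
  have hphase : ‖((‖z‖ ^ α : ℝ) : 𝕜) * (u ^ n - v ^ n)‖ ≤ 2 * n * ‖w‖ ^ (α - 1) * ‖w - z‖ := by
    rw [norm_mul, RCLike.norm_ofReal, abs_of_nonneg (by positivity)]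
    calc ‖z‖ ^ α * ‖u ^ n - v ^ n‖ ≤ ‖w‖ ^ α * (n * ‖u - v‖) := by
          gcongr
          exact norm_pow_sub_pow_le_of_norm_le_one hu hv n
      _ = n * ‖w‖ ^ (α - 1) * (‖w‖ * ‖u - v‖) := by rw [hWα]; ring
      _ ≤ n * ‖w‖ ^ (α - 1) * (2 * ‖w - z‖) :=
          mul_le_mul_of_nonneg_left (norm_mul_norm_inv_norm_smul_sub_le w z)
            (by positivity)
      _ = 2 * n * ‖w‖ ^ (α - 1) * ‖w - z‖ := by ring
  calc ‖normRpowMulPow α n w - normRpowMulPow α n z‖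
      ≤ α * ‖w‖ ^ (α - 1) * ‖w - z‖ + 2 * n * ‖w‖ ^ (α - 1) * ‖w - z‖ :=
        hsplit ▸ (norm_add_le _ _).trans (add_le_add hmodulus hphase)
    _ = (α + 2 * n) * ‖w‖ ^ (α - 1) * ‖w - z‖ := by ring

lemma norm_normRpowMulPow_sub_le {α : ℝ} (hα : 1 ≤ α) (n : ℕ) (w z : 𝕜) :
    ‖normRpowMulPow α n w - normRpowMulPow α n z‖
      ≤ (α + 2 * n) * max ‖w‖ ‖z‖ ^ (α - 1) * ‖w - z‖ := by
  rcases le_total ‖z‖ ‖w‖ with h | h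
  · simpa only [max_eq_left h] using norm_normRpowMulPow_sub_le_of_norm_le hα n h
  · rw [max_eq_right h, norm_sub_rev, norm_sub_rev w]
    exact norm_normRpowMulPow_sub_le_of_norm_le hα n h

end RCLike

/-- bound for the difference `|z_θ|^{2σ−1−n} z_θ^n − |z₀|^{2σ−1−n} z₀^n`
along the segment `z_θ = z₀ + θ z_*`. -/
theorem segment_difference_bound_pow (σ : ℝ) (hσ : 1 ≤ σ) (n : ℕ) :
    ∃ C > 0, ∀ (z₀ zs : ℂ) (θ : ℝ), θ ∈ Set.Icc (0:ℝ) 1 →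
      ‖(↑(‖z₀ + ↑θ * zs‖ ^ (2*σ-1-(n:ℝ))) : ℂ) * (z₀ + ↑θ * zs)^n
          - (↑(‖z₀‖ ^ (2*σ-1-(n:ℝ))) : ℂ) * z₀^n‖
        ≤ C * (‖zs‖ ^ (2*σ-1) + ‖z₀‖ ^ (2*σ-2) * ‖zs‖) := by
  set α := 2 * σ - 1
  have hα : 1 ≤ α := by linarith
  refine ⟨(α + 2 * n) * 2 ^ (α - 1), by positivity, fun z₀ zs θ ⟨hθ0, hθ1⟩ ↦ ?_⟩
  have hstep : ‖(z₀ + θ * zs) - z₀‖ ≤ ‖zs‖ := by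
    rw [add_sub_cancel_left, norm_mul, Complex.norm_real, Real.norm_of_nonneg hθ0]
    exact mul_le_of_le_one_left (norm_nonneg zs) hθ1
  have hmax : max ‖z₀ + θ * zs‖ ‖z₀‖ ≤ ‖z₀‖ + ‖zs‖ :=
    max_le (by linarith [norm_sub_norm_le (z₀ + θ * zs) z₀])
      (le_add_of_nonneg_right (norm_nonneg zs))
  have hpow : max ‖z₀ + θ * zs‖ ‖z₀‖ ^ (α - 1) ≤ 2 ^ (α - 1) * (‖z₀‖ ^ (α - 1) + ‖zs‖ ^ (α - 1)) :=
    (Real.rpow_le_rpow (by positivity) hmax (by linarith)).trans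
      (Real.add_rpow_le_two_rpow_mul_add_rpow (norm_nonneg _) (norm_nonneg _) (by linarith))
  rw [show 2 * σ - 2 = α - 1 by ring,
    Real.rpow_eq_rpow_sub_one_mul (norm_nonneg zs) (by linarith : α ≠ 0)]
  calc _ ≤ (α + 2 * n) * max ‖z₀ + θ * zs‖ ‖z₀‖ ^ (α - 1) * ‖(z₀ + θ * zs) - z₀‖ :=
        norm_normRpowMulPow_sub_le hα n (z₀ + θ * zs) z₀
    _ ≤ (α + 2 * n) * (2 ^ (α - 1) * (‖z₀‖ ^ (α - 1) + ‖zs‖ ^ (α - 1))) * ‖zs‖ := by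
        gcongr
    _ = _ := by ring
end

section
/- Let σ ≥ 1. There exists a constant C > 0, depending only on σ, with the following property: for every φ ∈ L^∞(ℝ; ℂ) and all measurable functions v_p, v_* : ℝ → ℂ with |v_p(x)| = |φ(x)| for almost every x and with v_* ∈ L²(ℝ) ∩ L^∞(ℝ), one has ‖G_σ[v_p, v_*]‖_{L²(ℝ)} ≤ C ( ‖v_*‖_{L^∞}^{2σ} + ‖φ‖_{L^∞}^{2σ−1} ‖v_*‖_{L^∞} ) ‖v_*‖_{L²}. -/
/-! For `θ ∈ [0, 1]` the point `v_θ` stays in the ball of radius `R = |v_p| + |v_*|`, on which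
`t ↦ t ^ (2σ)` and `z ↦ |z| ^ (2σ - 2) z²` are Lipschitz with constant `O(R ^ (2σ - 1))`. Both
integrands are therefore `O(R ^ (2σ - 1) |v_*|)`, so `|G| ≤ C R ^ (2σ - 1) |v_*|²` pointwise.
Bounding `R` and one factor `|v_*|` by `L^∞` norms, and using
`(a + b) ^ (2σ - 1) ≤ 2 ^ (2σ - 2) (a ^ (2σ - 1) + b ^ (2σ - 1))`, leaves a constant multiple
of `|v_*|`, whose `L²` norm gives the bound. -/

open MeasureTheory Complex

/-- The nonlinear remainder `G_σ[v_p, v_*]` from the paper: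
`G_σ[v_p,v_*](x) = (σ+1) v_*(x) ∫₀¹ (|v_θ(x)|^{2σ} − |v_p(x)|^{2σ}) dθ
  + σ conj(v_*(x)) ∫₀¹ (|v_θ(x)|^{2σ−2} v_θ(x)² − |v_p(x)|^{2σ−2} v_p(x)²) dθ`,
where `v_θ = v_p + θ v_*`. -/
noncomputable def Gfun (σ' : ℝ) (vp vs : ℝ → ℂ) (x : ℝ) : ℂ :=
  (↑(σ'+1) : ℂ) * vs x *
      (∫ θ in (0:ℝ)..1,
        ((↑(‖vp x + ↑θ * vs x‖ ^ (2*σ')) : ℂ)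
          - (↑(‖vp x‖ ^ (2*σ')) : ℂ)))
  + (↑σ' : ℂ) * (starRingEnd ℂ) (vs x) *
      (∫ θ in (0:ℝ)..1,
        ((↑(‖vp x + ↑θ * vs x‖ ^ (2*σ'-2)) : ℂ) * (vp x + ↑θ * vs x)^2
          - (↑(‖vp x‖ ^ (2*σ'-2)) : ℂ) * (vp x)^2))

namespace Real

lemma rpow_sub_rpow_le_mul_sub {q a b : ℝ} (hq : 1 ≤ q) (hb : 0 ≤ b) (hba : b ≤ a) :
    a ^ q - b ^ q ≤ q * a ^ (q - 1) * (a - b) := by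
  rcases (hb.trans hba).eq_or_lt with rfl | ha
  · simp [le_antisymm hba hb, zero_rpow (by linarith : q ≠ 0)]
  -- Bernoulli's inequality at `s = b / a - 1`, scaled by `a ^ q`.
  have bernoulli : 1 + q * (b / a - 1) ≤ (b / a) ^ q := by
    simpa using one_add_mul_self_le_rpow_one_add
      (by linarith [div_nonneg hb ha.le] : -1 ≤ b / a - 1) hq
  have scaled := mul_le_mul_of_nonneg_right bernoulli (rpow_nonneg ha.le q)
  rw [div_rpow hb ha.le, div_mul_cancel₀ _ (rpow_pos_of_pos ha q).ne'] at scaled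
  have tangent : (1 + q * (b / a - 1)) * a ^ q = a ^ q - q * a ^ (q - 1) * (a - b) := by
    rw [rpow_sub_one ha.ne']
    field_simp
    ring
  linarith

lemma abs_rpow_sub_rpow_le {q M a b : ℝ} (hq : 1 ≤ q) (ha : 0 ≤ a) (hb : 0 ≤ b)
    (haM : a ≤ M) (hbM : b ≤ M) :
    |a ^ q - b ^ q| ≤ q * M ^ (q - 1) * |a - b| := by
  wlog hba : b ≤ a generalizing a b
  · rw [abs_sub_comm, abs_sub_comm a]
    exact this hb ha hbM haM (le_of_not_ge hba)
  rw [abs_of_nonneg (sub_nonneg.2 (rpow_le_rpow hb hba (by linarith))),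
    abs_of_nonneg (sub_nonneg.2 hba)]
  calc a ^ q - b ^ q ≤ q * a ^ (q - 1) * (a - b) := rpow_sub_rpow_le_mul_sub hq hb hba
    _ ≤ q * M ^ (q - 1) * (a - b) := by gcongr

lemma abs_rpow_sub_rpow_mul_le {r a b : ℝ} (hr : 0 ≤ r) (ha : 0 ≤ a) (hb : 0 ≤ b) :
    |a ^ r - b ^ r| * b ≤ |a ^ (r + 1) - b ^ (r + 1)| := by
  have hr1 : r + 1 ≠ 0 := by linarith
  rw [rpow_add_one' ha hr1, rpow_add_one' hb hr1]
  have har := rpow_nonneg ha r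
  rcases le_total a b with hab | hba
  · have := rpow_le_rpow ha hab hr
    rw [abs_of_nonpos (by linarith), abs_of_nonpos (by nlinarith)]
    nlinarith [mul_le_mul_of_nonneg_left hab har]
  · have := rpow_le_rpow hb hba hr
    rw [abs_of_nonneg (by linarith), abs_of_nonneg (by nlinarith)]
    nlinarith [mul_le_mul_of_nonneg_left hba har]

end Real

lemma norm_rpow_norm_mul_sq_sub_le {r M : ℝ} (hr : 0 ≤ r) {z w : ℂ} (hz : ‖z‖ ≤ M)
    (hw : ‖w‖ ≤ M) :
    ‖(↑(‖z‖ ^ r) : ℂ) * z ^ 2 - (↑(‖w‖ ^ r) : ℂ) * w ^ 2‖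
      ≤ (r + 3) * M ^ (r + 1) * ‖z - w‖ := by
  have hM : 0 ≤ M := (norm_nonneg z).trans hz
  rw [Real.rpow_add_one' hM (by linarith)]
  have first : ‖(↑(‖z‖ ^ r) : ℂ) * (z ^ 2 - w ^ 2)‖ ≤ 2 * (M ^ r * M) * ‖z - w‖ := by
    rw [norm_mul, norm_real, Real.norm_of_nonneg (by positivity),
      show z ^ 2 - w ^ 2 = (z + w) * (z - w) by ring, norm_mul]
    have hsum : ‖z + w‖ ≤ 2 * M := by linarith [norm_add_le z w]
    have : ‖z‖ ^ r ≤ M ^ r := Real.rpow_le_rpow (norm_nonneg z) hz hr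
    calc ‖z‖ ^ r * (‖z + w‖ * ‖z - w‖) ≤ M ^ r * (2 * M * ‖z - w‖) := by gcongr
      _ = 2 * (M ^ r * M) * ‖z - w‖ := by ring
  -- `‖z‖ ^ r` need not be Lipschitz in `z` when `r < 1`, but it is once multiplied by `‖w‖`.
  have second : ‖((↑(‖z‖ ^ r) : ℂ) - ↑(‖w‖ ^ r)) * w ^ 2‖
      ≤ (r + 1) * (M ^ r * M) * ‖z - w‖ := by
    rw [norm_mul, ← ofReal_sub, norm_real, Real.norm_eq_abs, norm_pow, sq, ← mul_assoc]
    calc |‖z‖ ^ r - ‖w‖ ^ r| * ‖w‖ * ‖w‖ ≤ |‖z‖ ^ (r + 1) - ‖w‖ ^ (r + 1)| * M := by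
          gcongr
          exact Real.abs_rpow_sub_rpow_mul_le hr (norm_nonneg z) (norm_nonneg w)
      _ ≤ (r + 1) * M ^ (r + 1 - 1) * ‖z - w‖ * M := by
          gcongr
          exact (Real.abs_rpow_sub_rpow_le (by linarith) (norm_nonneg z) (norm_nonneg w) hz
            hw).trans (by gcongr; exact abs_norm_sub_norm_le z w)
      _ = (r + 1) * (M ^ r * M) * ‖z - w‖ := by rw [add_sub_cancel_right]; ring
  calc _ = ‖(↑(‖z‖ ^ r) : ℂ) * (z ^ 2 - w ^ 2)
          + ((↑(‖z‖ ^ r) : ℂ) - ↑(‖w‖ ^ r)) * w ^ 2‖ := by ring_nf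
    _ ≤ _ := (norm_add_le _ _).trans (add_le_add first second)
    _ = (r + 3) * (M ^ r * M) * ‖z - w‖ := by ring

lemma norm_ofReal_mul_le_of_mem_uIoc {θ : ℝ} (hθ : θ ∈ Set.uIoc (0 : ℝ) 1) (w : ℂ) :
    ‖(θ : ℂ) * w‖ ≤ ‖w‖ := by
  rw [Set.uIoc_of_le zero_le_one] at hθ
  rw [norm_mul, norm_real, Real.norm_of_nonneg hθ.1.le]
  exact mul_le_of_le_one_left (norm_nonneg w) hθ.2

lemma norm_integral_rpow_norm_sub_le {q : ℝ} (hq : 1 ≤ q) (z w : ℂ) :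
    ‖∫ θ in (0 : ℝ)..1, ((↑(‖z + ↑θ * w‖ ^ q) : ℂ) - (↑(‖z‖ ^ q) : ℂ))‖
      ≤ q * (‖z‖ + ‖w‖) ^ (q - 1) * ‖w‖ := by
  refine (intervalIntegral.norm_integral_le_of_norm_le_const
    (C := q * (‖z‖ + ‖w‖) ^ (q - 1) * ‖w‖) fun θ hθ => ?_).trans_eq (by simp)
  have hθw := norm_ofReal_mul_le_of_mem_uIoc hθ w
  rw [← ofReal_sub, norm_real, Real.norm_eq_abs]
  calc |‖z + θ * w‖ ^ q - ‖z‖ ^ q|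
      ≤ q * (‖z‖ + ‖w‖) ^ (q - 1) * |‖z + θ * w‖ - ‖z‖| :=
        Real.abs_rpow_sub_rpow_le hq (norm_nonneg _) (norm_nonneg _)
          ((norm_add_le _ _).trans (by linarith)) (by linarith [norm_nonneg w])
    _ ≤ q * (‖z‖ + ‖w‖) ^ (q - 1) * ‖w‖ := by
        gcongr
        exact (abs_norm_sub_norm_le _ _).trans (by rwa [add_sub_cancel_left])

lemma norm_integral_rpow_norm_mul_sq_sub_le {r : ℝ} (hr : 0 ≤ r) (z w : ℂ) :
    ‖∫ θ in (0 : ℝ)..1,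
        ((↑(‖z + ↑θ * w‖ ^ r) : ℂ) * (z + ↑θ * w) ^ 2 - (↑(‖z‖ ^ r) : ℂ) * z ^ 2)‖
      ≤ (r + 3) * (‖z‖ + ‖w‖) ^ (r + 1) * ‖w‖ := by
  refine (intervalIntegral.norm_integral_le_of_norm_le_const
    (C := (r + 3) * (‖z‖ + ‖w‖) ^ (r + 1) * ‖w‖) fun θ hθ => ?_).trans_eq (by simp)
  have hθw := norm_ofReal_mul_le_of_mem_uIoc hθ w
  calc _ ≤ (r + 3) * (‖z‖ + ‖w‖) ^ (r + 1) * ‖z + θ * w - z‖ :=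
        norm_rpow_norm_mul_sq_sub_le hr ((norm_add_le _ _).trans (by linarith))
          (by linarith [norm_nonneg w])
    _ ≤ (r + 3) * (‖z‖ + ‖w‖) ^ (r + 1) * ‖w‖ := by
        rw [add_sub_cancel_left]
        gcongr

lemma norm_Gfun_le {σ : ℝ} (hσ : 1 ≤ σ) (vp vs : ℝ → ℂ) (x : ℝ) :
    ‖Gfun σ vp vs x‖
      ≤ (4 * σ ^ 2 + 3 * σ) * (‖vp x‖ + ‖vs x‖) ^ (2 * σ - 1) * ‖vs x‖ ^ 2 := by
  have I₁ := norm_integral_rpow_norm_sub_le (by linarith : 1 ≤ 2 * σ) (vp x) (vs x)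
  have I₂ := norm_integral_rpow_norm_mul_sq_sub_le (by linarith : 0 ≤ 2 * σ - 2) (vp x)
    (vs x)
  rw [show 2 * σ - 2 + 1 = 2 * σ - 1 by ring, show 2 * σ - 2 + 3 = 2 * σ + 1 by ring]
    at I₂
  refine (norm_add_le _ _).trans ?_
  simp only [norm_mul, norm_real, norm_conj, Real.norm_of_nonneg (by linarith : 0 ≤ σ),
    Real.norm_of_nonneg (by linarith : 0 ≤ σ + 1)]
  calc (σ + 1) * ‖vs x‖ * ‖∫ θ in (0 : ℝ)..1, _‖ + σ * ‖vs x‖ * ‖∫ θ in (0 : ℝ)..1, _‖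
      ≤ (σ + 1) * ‖vs x‖ * (2 * σ * (‖vp x‖ + ‖vs x‖) ^ (2 * σ - 1) * ‖vs x‖)
        + σ * ‖vs x‖ * ((2 * σ + 1) * (‖vp x‖ + ‖vs x‖) ^ (2 * σ - 1) * ‖vs x‖) := by
        gcongr
    _ = _ := by ring

lemma enorm_Gfun_le {σ : ℝ} (hσ : 1 ≤ σ) (vp vs : ℝ → ℂ) (x : ℝ) :
    ‖Gfun σ vp vs x‖ₑ
      ≤ ENNReal.ofReal (4 * σ ^ 2 + 3 * σ) * (‖vp x‖ₑ + ‖vs x‖ₑ) ^ (2 * σ - 1)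
        * ‖vs x‖ₑ ^ 2 := by
  have hσ0 : 0 ≤ σ := by linarith
  rw [← ofReal_norm, ← ofReal_norm, ← ofReal_norm,
    ← ENNReal.ofReal_add (norm_nonneg _) (norm_nonneg _),
    ENNReal.ofReal_rpow_of_nonneg (by positivity) (by linarith),
    ← ENNReal.ofReal_pow (norm_nonneg _), ← ENNReal.ofReal_mul (by positivity),
    ← ENNReal.ofReal_mul (by positivity)]
  exact ENNReal.ofReal_le_ofReal (norm_Gfun_le hσ vp vs x)

lemma ENNReal.add_rpow_sub_one_mul_le {p : ℝ} (hp : 2 ≤ p) (a b : ENNReal) :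
    (a + b) ^ (p - 1) * b ≤ 2 ^ (p - 2) * (b ^ p + a ^ (p - 1) * b) := by
  have hb : b ^ p = b ^ (p - 1) * b := by
    conv_lhs => rw [← sub_add_cancel p 1]
    rw [ENNReal.rpow_add_of_nonneg _ _ (by linarith) zero_le_one, ENNReal.rpow_one]
  calc (a + b) ^ (p - 1) * b ≤ 2 ^ (p - 1 - 1) * (a ^ (p - 1) + b ^ (p - 1)) * b := by
        gcongr
        exact ENNReal.rpow_add_le_mul_rpow_add_rpow a b (by linarith)
    _ = 2 ^ (p - 2) * (b ^ p + a ^ (p - 1) * b) := by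
        rw [show p - 1 - 1 = p - 2 by ring, hb]
        ring

lemma ae_enorm_Gfun_le {σ : ℝ} (hσ : 1 ≤ σ) {φ vp : ℝ → ℂ} (vs : ℝ → ℂ)
    (hvp : ∀ᵐ x, ‖vp x‖ = ‖φ x‖) :
    ∀ᵐ x, ‖Gfun σ vp vs x‖ₑ ≤ ENNReal.ofReal (4 * σ ^ 2 + 3 * σ)
      * (eLpNorm φ ⊤ volume + eLpNorm vs ⊤ volume) ^ (2 * σ - 1) * eLpNorm vs ⊤ volume
      * ‖vs x‖ₑ := by
  filter_upwards [enorm_ae_le_eLpNormEssSup φ volume, enorm_ae_le_eLpNormEssSup vs volume, hvp]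
    with x hφx hvsx hnorm
  rw [← eLpNorm_exponent_top] at hφx hvsx
  have hvpx : ‖vp x‖ₑ ≤ eLpNorm φ ⊤ volume := by rwa [← ofReal_norm, hnorm, ofReal_norm]
  calc ‖Gfun σ vp vs x‖ₑ
      ≤ ENNReal.ofReal (4 * σ ^ 2 + 3 * σ) * (‖vp x‖ₑ + ‖vs x‖ₑ) ^ (2 * σ - 1)
          * ‖vs x‖ₑ * ‖vs x‖ₑ := by
        rw [mul_assoc _ ‖vs x‖ₑ, ← sq]
        exact enorm_Gfun_le hσ vp vs x
    _ ≤ _ := by gcongr; linarith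

/-- L² bound for `G_σ[v_p, v_*]`. -/
theorem Gfun_L2_bound (σ : ℝ) (hσ : 1 ≤ σ) :
    ∃ C > 0, ∀ (φ vp vs : ℝ → ℂ),
      MemLp φ ⊤ volume →
      Measurable vp → Measurable vs →
      (∀ᵐ x : ℝ, ‖vp x‖ = ‖φ x‖) →
      MemLp vs 2 volume → MemLp vs ⊤ volume →
      eLpNorm (Gfun σ vp vs) 2 volume
        ≤ ENNReal.ofReal C *
            ((eLpNorm vs ⊤ volume) ^ (2*σ)
              + (eLpNorm φ ⊤ volume) ^ (2*σ-1) * eLpNorm vs ⊤ volume)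
            * eLpNorm vs 2 volume := by
  refine ⟨(4 * σ ^ 2 + 3 * σ) * 2 ^ (2 * σ - 2), by positivity, ?_⟩
  intro φ vp vs _ _ hvs hvp _ _
  set A := eLpNorm φ ⊤ volume
  set B := eLpNorm vs ⊤ volume
  calc eLpNorm (Gfun σ vp vs) 2 volume
      ≤ ENNReal.ofReal (4 * σ ^ 2 + 3 * σ) * (A + B) ^ (2 * σ - 1) * B * eLpNorm vs 2 volume :=
        eLpNorm_le_mul_eLpNorm_of_ae_le_mul'' 2 hvs.aestronglyMeasurable
          (ae_enorm_Gfun_le hσ vs hvp)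
    _ ≤ ENNReal.ofReal (4 * σ ^ 2 + 3 * σ)
          * (2 ^ (2 * σ - 2) * (B ^ (2 * σ) + A ^ (2 * σ - 1) * B)) * eLpNorm vs 2 volume := by
        rw [mul_assoc _ ((A + B) ^ _)]
        gcongr _ * ?_ * _
        exact ENNReal.add_rpow_sub_one_mul_le (p := 2 * σ) (by linarith) A B
    _ = _ := by
        rw [ENNReal.ofReal_mul (by positivity), ← ENNReal.ofReal_rpow_of_pos two_pos,
          ENNReal.ofReal_ofNat]
        ring
end

section
/- Let σ ≥ 1 be a real number and K ≥ 0. There exists a constant C > 0, depending only on σ and K, such that for all complex numbers z_p, z₁, z₂ with |z_p| ≤ K and all θ ∈ [0,1], writing z_{jθ} = z_p + θ·z_j for j = 1,2: | conj(z₁) ( |z_{1θ}|^{2σ−2} z_{1θ}² − |z_p|^{2σ−2} z_p² ) − conj(z₂) ( |z_{2θ}|^{2σ−2} z_{2θ}² − |z_p|^{2σ−2} z_p² ) | ≤ C ( |z₁|^{2σ} + |z₁| + |z₂|^{2σ} + |z₂| ) |z₁ − z₂|. -/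
/-!
Write `G(z) = |z|^a z²` with `a = 2σ - 2 ≥ 0`. Splitting
`G(w) - G(v) = |w|^a (w + v)(w - v) + (|w|^a - |v|^a) v²` and bounding the second term through
the tangent-line inequality for `t ↦ t^(a+1)` shows that `G` is Lipschitz on the ball of radius `R`
with constant `(a + 3) R^(a+1)`. The difference in the theorem equals
`conj(z₁ - z₂) (G(w₁) - G(z_p)) + conj(z₂) (G(w₁) - G(w₂))`, and both terms are then bounded by
this local Lipschitz estimate, with `R` at most `K + max(|z₁|, |z₂|)`.
-/

open Complex ComplexConjugate

noncomputable def normRpowMulSq (a : ℝ) (z : ℂ) : ℂ := ((‖z‖ ^ a : ℝ) : ℂ) * z ^ 2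

namespace Real

lemma rpow_add_le_mul_rpow_add_rpow {x y p : ℝ} (hx : 0 ≤ x) (hy : 0 ≤ y) (hp : 1 ≤ p) :
    (x + y) ^ p ≤ 2 ^ (p - 1) * (x ^ p + y ^ p) := by
  lift x to NNReal using hx
  lift y to NNReal using hy
  exact_mod_cast NNReal.rpow_add_le_mul_rpow_add_rpow x y hp

lemma rpow_add_one_sub_rpow_add_one_le {a x y : ℝ} (ha : 0 ≤ a) (hx : 0 ≤ x) (hxy : x ≤ y) :
    y ^ (a + 1) - x ^ (a + 1) ≤ (a + 1) * y ^ a * (y - x) := by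
  rcases (hx.trans hxy).eq_or_lt with rfl | hy
  · obtain rfl : x = 0 := le_antisymm hxy hx
    simp
  -- Bernoulli's inequality at `1 + s = x / y`
  have h := one_add_mul_self_le_rpow_one_add (s := x / y - 1)
    (by linarith [div_nonneg hx hy.le]) (p := a + 1) (by linarith)
  rw [add_sub_cancel, div_rpow hx hy.le, le_div_iff₀ (rpow_pos_of_pos hy _),
    rpow_add_one hy.ne'] at h
  have hexpand : (1 + (a + 1) * (x / y - 1)) * (y ^ a * y)
      = y ^ a * y - (a + 1) * y ^ a * (y - x) := by
    field_simp
    ring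
  rw [rpow_add_one hy.ne']
  linarith

lemma mul_rpow_sub_rpow_le {a x y : ℝ} (ha : 0 ≤ a) (hx : 0 ≤ x) (hxy : x ≤ y) :
    x * (y ^ a - x ^ a) ≤ (a + 1) * y ^ a * (y - x) := by
  have h := rpow_add_one_sub_rpow_add_one_le ha hx hxy
  rw [rpow_add_one' hx (by linarith), rpow_add_one' (hx.trans hxy) (by linarith)] at h
  nlinarith [mul_le_mul_of_nonneg_left hxy (rpow_nonneg (hx.trans hxy) a)]

lemma add_rpow_add_one_mul_le {a K m r : ℝ} (ha : 0 ≤ a) (hK : 0 ≤ K) (hr : 0 ≤ r)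
    (hrm : r ≤ m) :
    (K + m) ^ (a + 1) * r ≤ 2 ^ a * (K ^ (a + 1) + 1) * (m ^ (a + 2) + r) := by
  have hm : 0 ≤ m := hr.trans hrm
  have hKm := rpow_add_le_mul_rpow_add_rpow hK hm (p := a + 1) (by linarith)
  rw [add_sub_cancel_right] at hKm
  have hmr : m ^ (a + 1) * r ≤ m ^ (a + 2) := by
    rw [show a + 2 = a + 1 + 1 by ring, rpow_add_one' hm (y := a + 1) (by linarith)]
    exact mul_le_mul_of_nonneg_left hrm (rpow_nonneg hm _)
  have hKa := rpow_nonneg hK (a + 1)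
  have hma := rpow_nonneg hm (a + 2)
  calc (K + m) ^ (a + 1) * r ≤ 2 ^ a * (K ^ (a + 1) + m ^ (a + 1)) * r :=
        mul_le_mul_of_nonneg_right hKm hr
    _ = 2 ^ a * (K ^ (a + 1) * r + m ^ (a + 1) * r) := by ring
    _ ≤ 2 ^ a * (K ^ (a + 1) * r + m ^ (a + 2)) := by gcongr
    _ ≤ 2 ^ a * ((K ^ (a + 1) + 1) * (m ^ (a + 2) + r)) := by gcongr; nlinarith
    _ = _ := by ring

end Real

lemma norm_normRpowMulSq_sub_le_of_norm_le {a : ℝ} (ha : 0 ≤ a) {v w : ℂ} (hvw : ‖v‖ ≤ ‖w‖) :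
    ‖normRpowMulSq a w - normRpowMulSq a v‖ ≤ (a + 3) * ‖w‖ ^ (a + 1) * ‖w - v‖ := by
  have hsplit : normRpowMulSq a w - normRpowMulSq a v
      = ((‖w‖ ^ a : ℝ) : ℂ) * ((w + v) * (w - v)) + ((‖w‖ ^ a - ‖v‖ ^ a : ℝ) : ℂ) * v ^ 2 := by
    simp only [normRpowMulSq]
    push_cast
    ring
  have hwa := Real.rpow_nonneg (norm_nonneg w) a
  have hsub : ‖w‖ - ‖v‖ ≤ ‖w - v‖ := norm_sub_norm_le w v
  have h₁ : ‖((‖w‖ ^ a : ℝ) : ℂ) * ((w + v) * (w - v))‖ ≤ 2 * ‖w‖ ^ (a + 1) * ‖w - v‖ := by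
    rw [norm_mul, norm_mul, norm_real, Real.norm_of_nonneg hwa,
      Real.rpow_add_one' (norm_nonneg w) (by linarith)]
    have : ‖w + v‖ ≤ 2 * ‖w‖ := by linarith [norm_add_le w v]
    calc ‖w‖ ^ a * (‖w + v‖ * ‖w - v‖) ≤ ‖w‖ ^ a * (2 * ‖w‖ * ‖w - v‖) := by gcongr
      _ = _ := by ring
  have h₂ : ‖((‖w‖ ^ a - ‖v‖ ^ a : ℝ) : ℂ) * v ^ 2‖ ≤ (a + 1) * ‖w‖ ^ (a + 1) * ‖w - v‖ := by
    have hmono : ‖v‖ ^ a ≤ ‖w‖ ^ a := Real.rpow_le_rpow (norm_nonneg v) hvw ha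
    rw [norm_mul, norm_real, Real.norm_of_nonneg (sub_nonneg.2 hmono), norm_pow,
      Real.rpow_add_one' (norm_nonneg w) (by linarith)]
    calc (‖w‖ ^ a - ‖v‖ ^ a) * ‖v‖ ^ 2 ≤ ‖w‖ * (‖v‖ * (‖w‖ ^ a - ‖v‖ ^ a)) := by
          nlinarith [mul_le_mul_of_nonneg_right hvw (norm_nonneg v)]
      _ ≤ ‖w‖ * ((a + 1) * ‖w‖ ^ a * (‖w‖ - ‖v‖)) :=
          mul_le_mul_of_nonneg_left (Real.mul_rpow_sub_rpow_le ha (norm_nonneg v) hvw)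
            (norm_nonneg w)
      _ ≤ ‖w‖ * ((a + 1) * ‖w‖ ^ a * ‖w - v‖) := by gcongr
      _ = _ := by ring
  calc _ = _ := by rw [hsplit]
    _ ≤ _ := norm_add_le _ _
    _ ≤ _ := add_le_add h₁ h₂
    _ = _ := by ring

lemma norm_normRpowMulSq_sub_le {a R : ℝ} (ha : 0 ≤ a) {v w : ℂ} (hw : ‖w‖ ≤ R)
    (hv : ‖v‖ ≤ R) :
    ‖normRpowMulSq a w - normRpowMulSq a v‖ ≤ (a + 3) * R ^ (a + 1) * ‖w - v‖ := by
  wlog hvw : ‖v‖ ≤ ‖w‖ generalizing v w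
  · rw [norm_sub_rev, norm_sub_rev w]
    exact this hv hw (le_of_not_ge hvw)
  calc _ ≤ (a + 3) * ‖w‖ ^ (a + 1) * ‖w - v‖ := norm_normRpowMulSq_sub_le_of_norm_le ha hvw
    _ ≤ _ := by gcongr

lemma norm_normRpowMulSq_add_mul_sub_le {a K m : ℝ} (ha : 0 ≤ a) {p c z z' : ℂ}
    (hp : ‖p‖ ≤ K) (hc : ‖c‖ ≤ 1) (hz : ‖z‖ ≤ m) (hz' : ‖z'‖ ≤ m) :
    ‖normRpowMulSq a (p + c * z) - normRpowMulSq a (p + c * z')‖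
      ≤ (a + 3) * (K + m) ^ (a + 1) * ‖z - z'‖ := by
  have hcz (z : ℂ) : ‖c * z‖ ≤ ‖z‖ := by
    rw [norm_mul]
    exact mul_le_of_le_one_left (norm_nonneg z) hc
  have hw {z : ℂ} (hz : ‖z‖ ≤ m) : ‖p + c * z‖ ≤ K + m :=
    (norm_add_le _ _).trans (add_le_add hp ((hcz z).trans hz))
  refine (norm_normRpowMulSq_sub_le ha (hw hz) (hw hz')).trans ?_
  rw [add_sub_add_left_eq_sub, ← mul_sub]
  have hKm : 0 ≤ K + m := by linarith [norm_nonneg p, norm_nonneg z]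
  gcongr
  exact hcz _

theorem norm_conj_mul_normRpowMulSq_sub_le {a K : ℝ} (ha : 0 ≤ a) (hK : 0 ≤ K) {p c : ℂ}
    (hp : ‖p‖ ≤ K) (hc : ‖c‖ ≤ 1) (z₁ z₂ : ℂ) :
    ‖conj z₁ * (normRpowMulSq a (p + c * z₁) - normRpowMulSq a p)
        - conj z₂ * (normRpowMulSq a (p + c * z₂) - normRpowMulSq a p)‖
      ≤ 2 ^ (a + 1) * (a + 3) * (K ^ (a + 1) + 1)
        * (‖z₁‖ ^ (a + 2) + ‖z₁‖ + ‖z₂‖ ^ (a + 2) + ‖z₂‖) * ‖z₁ - z₂‖ := by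
  set G := normRpowMulSq a
  obtain ⟨m, hm₁, hm₂, hm⟩ : ∃ m, ‖z₁‖ ≤ m ∧ ‖z₂‖ ≤ m ∧
      m ^ (a + 2) ≤ ‖z₁‖ ^ (a + 2) + ‖z₂‖ ^ (a + 2) := by
    refine ⟨max ‖z₁‖ ‖z₂‖, le_max_left _ _, le_max_right _ _, ?_⟩
    rcases max_cases ‖z₁‖ ‖z₂‖ with ⟨hm, -⟩ | ⟨hm, -⟩ <;> rw [hm]
    · linarith [Real.rpow_nonneg (norm_nonneg z₂) (a + 2)]
    · linarith [Real.rpow_nonneg (norm_nonneg z₁) (a + 2)]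
  have hsplit : conj z₁ * (G (p + c * z₁) - G p) - conj z₂ * (G (p + c * z₂) - G p)
      = conj (z₁ - z₂) * (G (p + c * z₁) - G p)
        + conj z₂ * (G (p + c * z₁) - G (p + c * z₂)) := by
    rw [map_sub]
    ring
  have h₁ : ‖G (p + c * z₁) - G p‖ ≤ (a + 3) * (K + ‖z₁‖) ^ (a + 1) * ‖z₁‖ := by
    simpa using norm_normRpowMulSq_add_mul_sub_le (z' := 0) ha hp hc le_rfl (by simp)
  have h₂ := norm_normRpowMulSq_add_mul_sub_le ha hp hc hm₁ hm₂
  have g₁ := Real.add_rpow_add_one_mul_le ha hK (norm_nonneg z₁) le_rfl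
  have g₂ := Real.add_rpow_add_one_mul_le ha hK (norm_nonneg z₂) hm₂
  calc _ = ‖conj (z₁ - z₂) * (G (p + c * z₁) - G p)
        + conj z₂ * (G (p + c * z₁) - G (p + c * z₂))‖ := by rw [hsplit]
    _ ≤ ‖z₁ - z₂‖ * ‖G (p + c * z₁) - G p‖ + ‖z₂‖ * ‖G (p + c * z₁) - G (p + c * z₂)‖ := by
        refine (norm_add_le _ _).trans_eq ?_
        rw [norm_mul, norm_mul, norm_conj, norm_conj]
    _ ≤ ‖z₁ - z₂‖ * ((a + 3) * (K + ‖z₁‖) ^ (a + 1) * ‖z₁‖)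
        + ‖z₂‖ * ((a + 3) * (K + m) ^ (a + 1) * ‖z₁ - z₂‖) := by gcongr
    _ = (a + 3) * ‖z₁ - z₂‖ * ((K + ‖z₁‖) ^ (a + 1) * ‖z₁‖ + (K + m) ^ (a + 1) * ‖z₂‖) := by
        ring
    _ ≤ (a + 3) * ‖z₁ - z₂‖ * (2 ^ a * (K ^ (a + 1) + 1) * (‖z₁‖ ^ (a + 2) + ‖z₁‖)
        + 2 ^ a * (K ^ (a + 1) + 1) * (m ^ (a + 2) + ‖z₂‖)) := by gcongr
    _ ≤ (a + 3) * ‖z₁ - z₂‖ * (2 ^ a * (K ^ (a + 1) + 1)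
        * (2 * (‖z₁‖ ^ (a + 2) + ‖z₁‖ + ‖z₂‖ ^ (a + 2) + ‖z₂‖))) := by
        rw [← mul_add]
        gcongr
        linarith [norm_nonneg z₁, norm_nonneg z₂, Real.rpow_nonneg (norm_nonneg z₂) (a + 2)]
    _ = _ := by
        rw [Real.rpow_add_one two_ne_zero]
        ring

/-- Lipschitz-type estimate for
`z ↦ conj(z) (|z_p + θ z|^{2σ−2}(z_p + θ z)² − |z_p|^{2σ−2} z_p²)` with bounded `z_p`. -/
theorem conj_mul_segment_difference_lipschitz (σ K : ℝ) (hσ : 1 ≤ σ) (hK : 0 ≤ K) :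
    ∃ C > 0, ∀ (zp z₁ z₂ : ℂ), norm zp ≤ K → ∀ θ ∈ Set.Icc (0:ℝ) 1,
      norm
        ((starRingEnd ℂ) z₁ *
            ((↑(norm (zp + ↑θ * z₁) ^ (2*σ-2)) : ℂ) * (zp + ↑θ * z₁)^2
              - (↑(norm zp ^ (2*σ-2)) : ℂ) * zp^2)
          - (starRingEnd ℂ) z₂ *
            ((↑(norm (zp + ↑θ * z₂) ^ (2*σ-2)) : ℂ) * (zp + ↑θ * z₂)^2
              - (↑(norm zp ^ (2*σ-2)) : ℂ) * zp^2))
        ≤ C * (norm z₁ ^ (2*σ) + norm z₁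
            + norm z₂ ^ (2*σ) + norm z₂) * norm (z₁ - z₂) := by
  have ha : 0 ≤ 2 * σ - 2 := by linarith
  refine ⟨2 ^ (2 * σ - 2 + 1) * (2 * σ - 2 + 3) * (K ^ (2 * σ - 2 + 1) + 1), by positivity, ?_⟩
  rintro zp z₁ z₂ hzp θ ⟨hθ₀, hθ₁⟩
  have hθ : ‖(θ : ℂ)‖ ≤ 1 := by rwa [norm_real, Real.norm_of_nonneg hθ₀]
  have h := norm_conj_mul_normRpowMulSq_sub_le ha hK hzp hθ z₁ z₂
  rwa [show 2 * σ - 2 + 2 = 2 * σ by ring] at h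
end
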